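/- arXiv:math/0608237 — 3 statements merged into one kernel-verified Lean document; each statement's English description precedes it below -/
import Mathlib

section
/- For every real δ ∈ (0,1] and all nonnegative reals x, y, one has (x+y)^2 (1+x+y)^δ ≤ x^(2+δ) + y^(2+δ) + 5((1+x)^δ y^2 + x^2 (1+y)^δ). -/
lemma rpow_add_le' {a b p : ℝ} (ha : 0 ≤ a) (hb : 0 ≤ b) (hp : 0 ≤ p) (hp1 : p ≤ 1) :
    (a + b) ^ p ≤ a ^ p + b ^ p := by
  have := NNReal.rpow_add_le_add_rpow a.toNNReal b.toNNReal hp hp1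
  have h := NNReal.coe_le_coe.2 this
  push_cast at h
  rwa [Real.coe_toNNReal a ha, Real.coe_toNNReal b hb] at h

lemma aux (δ x y : ℝ) (hδ0 : 0 < δ) (hδ1 : δ ≤ 1) (hy : 0 ≤ y) (hyx : y ≤ x) :
    (x + y) ^ 2 * (1 + x + y) ^ δ ≤
      x ^ (2 + δ) + y ^ (2 + δ) + 5 * ((1 + x) ^ δ * y ^ 2 + x ^ 2 * (1 + y) ^ δ) := by
  have hx : 0 ≤ x := hy.trans hyx
  set A := (1 + x) ^ δ with hA
  set B := (1 + y) ^ δ with hB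
  have hB1 : (1:ℝ) ≤ B := Real.one_le_rpow (by linarith) hδ0.le
  have hA1 : (1:ℝ) ≤ A := Real.one_le_rpow (by linarith) hδ0.le
  have hBA : B ≤ A := Real.rpow_le_rpow (by linarith) (by linarith) hδ0.le
  have hxδ : 0 ≤ x ^ δ := Real.rpow_nonneg hx δ
  have hyδ : 0 ≤ y ^ δ := Real.rpow_nonneg hy δ
  -- subadditivity
  have hsub : (1 + x + y) ^ δ ≤ x ^ δ + B := by
    have := rpow_add_le' hx (by linarith : (0:ℝ) ≤ 1 + y) hδ0.le hδ1
    rw [show x + (1 + y) = 1 + x + y by ring] at this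
    exact this
  have h1 : (x + y) ^ 2 * (1 + x + y) ^ δ ≤ (x + y) ^ 2 * (x ^ δ + B) :=
    mul_le_mul_of_nonneg_left hsub (by positivity)
  -- x^(2+δ) = x^2 * x^δ
  have hx2δ : x ^ (2 + δ) = x ^ 2 * x ^ δ := by
    rw [Real.rpow_add' hx (by linarith), Real.rpow_two]
  -- key: x^δ * y ≤ x * y^δ
  have hkey : x ^ δ * y ≤ x * y ^ δ := by
    have hy' : y = y ^ δ * y ^ (1 - δ) := by
      rw [← Real.rpow_add' hy (by norm_num)]
      simp
    have hx' : x = x ^ δ * x ^ (1 - δ) := by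
      rw [← Real.rpow_add' hx (by norm_num)]
      simp
    have hmono : y ^ (1 - δ) ≤ x ^ (1 - δ) := Real.rpow_le_rpow hy hyx (by linarith)
    calc x ^ δ * y = x ^ δ * (y ^ δ * y ^ (1 - δ)) := by rw [← hy']
      _ ≤ x ^ δ * (y ^ δ * x ^ (1 - δ)) :=
          mul_le_mul_of_nonneg_left (mul_le_mul_of_nonneg_left hmono hyδ) hxδ
      _ = (x ^ δ * x ^ (1 - δ)) * y ^ δ := by ring
      _ = x * y ^ δ := by rw [← hx']
  have hxA : x ^ δ ≤ A := Real.rpow_le_rpow hx (by linarith) hδ0.le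
  have hyB : y ^ δ ≤ B := Real.rpow_le_rpow hy (by linarith) hδ0.le
  have hy2δ : 0 ≤ y ^ (2 + δ) := Real.rpow_nonneg hy _
  calc (x + y) ^ 2 * (1 + x + y) ^ δ ≤ (x + y) ^ 2 * (x ^ δ + B) := h1
    _ ≤ x ^ (2 + δ) + y ^ (2 + δ) + 5 * (A * y ^ 2 + x ^ 2 * B) := by
        rw [hx2δ]
        nlinarith [mul_le_mul_of_nonneg_left hkey (mul_nonneg (by norm_num : (0:ℝ) ≤ 2) hx),
          mul_le_mul_of_nonneg_left hxA (sq_nonneg y),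
          mul_le_mul_of_nonneg_left hyB (mul_nonneg (by norm_num : (0:ℝ) ≤ 2) (sq_nonneg x)),
          mul_le_mul_of_nonneg_right hBA (sq_nonneg y),
          mul_nonneg (mul_nonneg hx hy) (sub_nonneg.2 hB1),
          sq_nonneg (x - y), sq_nonneg (x + y)]

/-- Elementary inequality with `A_δ = 5` from the proof of Theorem 1.1
of Bulinski–Shashkin. -/
theorem stmt0 (δ x y : ℝ) (hδ0 : 0 < δ) (hδ1 : δ ≤ 1) (hx : 0 ≤ x) (hy : 0 ≤ y) :
    (x + y) ^ 2 * (1 + x + y) ^ δ ≤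
      x ^ (2 + δ) + y ^ (2 + δ) + 5 * ((1 + x) ^ δ * y ^ 2 + x ^ 2 * (1 + y) ^ δ) := by
  rcases le_total y x with h | h
  · exact aux δ x y hδ0 hδ1 hy h
  · have := aux δ y x hδ0 hδ1 hx h
    calc (x + y) ^ 2 * (1 + x + y) ^ δ = (y + x) ^ 2 * (1 + y + x) ^ δ := by ring_nf
      _ ≤ y ^ (2 + δ) + x ^ (2 + δ) + 5 * ((1 + y) ^ δ * x ^ 2 + y ^ 2 * (1 + x) ^ δ) := this
      _ = x ^ (2 + δ) + y ^ (2 + δ) + 5 * ((1 + x) ^ δ * y ^ 2 + x ^ 2 * (1 + y) ^ δ) := by ring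
end

section
/- For any dimension d ≥ 1 and any real ν with 0 < ν < d, there exists c(d,ν) > 0 such that for every finite block U ⊂ ℤ^d and every i ∈ U, ∑_{j ∈ U, j ≠ i} ‖i − j‖^(−ν) ≤ c(d,ν) · (1 + log|U|) · |U|^(1 − ν/d), where ‖·‖ is the sup-norm and |U| is the cardinality of U. -/
/-!
Order the points `j ≠ i` of the block by their distance `g j` to `i`. The sup-norm ball of radius
`k ≥ 1` around `i` holds at most `(2k + 1)^d ≤ (3k)^d` lattice points, so the `m`-th closest point
satisfies `m ≤ (3 g j)^d`, i.e. `g j ^ (-ν) ≤ 3^ν m^(-ν/d)`. Summing over `m ≤ |U|` and comparing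
with `∫ x^(-ν/d)` gives `3^ν |U|^(1 - ν/d) / (1 - ν/d)`; the logarithmic factor is at least `1`.
-/

open Finset

theorem sum_range_add_one_rpow_neg_le {s : ℝ} (hs0 : 0 ≤ s) (hs : s < 1) (n : ℕ) :
    ∑ m ∈ range n, ((m : ℝ) + 1) ^ (-s) ≤ (n : ℝ) ^ (1 - s) / (1 - s) := by
  have h1s : 0 < 1 - s := by linarith
  obtain _ | k := n
  · simp [Real.zero_rpow h1s.ne']
  have hanti : AntitoneOn (fun x : ℝ => x ^ (-s)) (Set.Icc 1 (1 + k)) := by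
    intro x hx y _ hxy
    exact Real.rpow_le_rpow_of_nonpos (zero_lt_one.trans_le hx.1) hxy (by linarith)
  have htail : ∑ m ∈ range k, ((↑(m + 1) : ℝ) + 1) ^ (-s) ≤ ((k + 1 : ℝ) ^ (1 - s) - 1) / (1 - s) :=
    calc ∑ m ∈ range k, ((↑(m + 1) : ℝ) + 1) ^ (-s)
        = ∑ m ∈ range k, (1 + ↑(m + 1) : ℝ) ^ (-s) := by simp only [add_comm]
      _ ≤ ∫ x in (1 : ℝ)..1 + k, x ^ (-s) := hanti.sum_le_integral
      _ = ((k + 1 : ℝ) ^ (1 - s) - 1) / (1 - s) := by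
        rw [integral_rpow (Or.inl (by linarith)), Real.one_rpow, add_comm (1 : ℝ),
          neg_add_eq_sub]
  have hone : (1 : ℝ) ≤ 1 / (1 - s) := by rw [le_div_iff₀ h1s]; linarith
  rw [sum_range_succ', Nat.cast_zero, zero_add, Real.one_rpow]
  push_cast
  calc ∑ m ∈ range k, ((m + 1 : ℝ) + 1) ^ (-s) + 1
      ≤ ((k + 1 : ℝ) ^ (1 - s) - 1) / (1 - s) + 1 / (1 - s) := by push_cast at htail; linarith
    _ = (k + 1 : ℝ) ^ (1 - s) / (1 - s) := by ring

theorem rpow_neg_le_of_le_pow {x C n ν : ℝ} {d : ℕ} (hd : 0 < d) (hν : 0 ≤ ν) (hx : 0 < x)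
    (hC : 0 < C) (hn : 0 < n) (h : n ≤ (C * x) ^ d) : x ^ (-ν) ≤ C ^ ν * n ^ (-(ν / d)) :=
  calc x ^ (-ν) = C ^ ν * (C * x) ^ (-ν) := by
        rw [Real.mul_rpow hC.le hx.le, Real.rpow_neg hC.le, mul_inv_cancel_left₀]
        positivity
    _ = C ^ ν * ((C * x) ^ d) ^ (-(ν / d)) := by
        rw [← Real.rpow_natCast_mul (by positivity), mul_neg, mul_div_cancel₀ _ (by positivity)]
    _ ≤ C ^ ν * n ^ (-(ν / d)) :=
        mul_le_mul_of_nonneg_left (Real.rpow_le_rpow_of_nonpos hn h (neg_nonpos.mpr (by positivity)))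
          (by positivity)

theorem sum_rpow_neg_le_of_card_le {α : Type*} [DecidableEq α] {d : ℕ} (hd : 0 < d) {ν C : ℝ}
    (hν : 0 ≤ ν) (hC : 0 < C) (g : α → ℝ) (S : Finset α) (hg : ∀ j ∈ S, 0 < g j)
    (hcard : ∀ j ∈ S, (#{x ∈ S | g x ≤ g j} : ℝ) ≤ (C * g j) ^ d) :
    ∑ j ∈ S, g j ^ (-ν) ≤ C ^ ν * ∑ m ∈ range #S, ((m : ℝ) + 1) ^ (-(ν / d)) := by
  induction S using Finset.strongInduction with
  | H S ih =>
  rcases S.eq_empty_or_nonempty with rfl | hS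
  · simp
  obtain ⟨j₀, hj₀, hmax⟩ := S.exists_max_image g hS
  have hfar : ((#(S.erase j₀) : ℕ) : ℝ) + 1 = #S := by
    rw [← Nat.cast_add_one, card_erase_add_one hj₀]
  have hrest := ih (S.erase j₀) (erase_ssubset hj₀) (fun j hj => hg j (mem_of_mem_erase hj))
    fun j hj => (Nat.cast_le.mpr (card_le_card (filter_subset_filter _ (erase_subset _ _)))).trans
      (hcard j (mem_of_mem_erase hj))
  have hlast : g j₀ ^ (-ν) ≤ C ^ ν * (#S : ℝ) ^ (-(ν / d)) := by
    refine rpow_neg_le_of_le_pow hd hν (hg j₀ hj₀) hC (by exact_mod_cast hS.card_pos) ?_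
    simpa only [filter_true_of_mem hmax] using hcard j₀ hj₀
  rw [← add_sum_erase S _ hj₀, ← card_erase_add_one hj₀, sum_range_succ, mul_add, add_comm]
  exact add_le_add hrest (hfar ▸ hlast)

section Lattice

variable {ι : Type*} [Fintype ι]

theorem sup_natAbs_sub_pos {i j : ι → ℤ} (h : j ≠ i) :
    0 < univ.sup fun s => (i s - j s).natAbs := by
  obtain ⟨s, hs⟩ := Function.ne_iff.mp h
  exact lt_of_lt_of_le (by omega) (le_sup (f := fun s => (i s - j s).natAbs) (mem_univ s))

theorem card_filter_sup_natAbs_sub_le [DecidableEq ι] (i : ι → ℤ) (S : Finset (ι → ℤ)) (k : ℕ) :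
    #{j ∈ S | (univ.sup fun s => (i s - j s).natAbs) ≤ k} ≤ (2 * k + 1) ^ Fintype.card ι := by
  have hball : {j ∈ S | (univ.sup fun s => (i s - j s).natAbs) ≤ k} ⊆
      Icc (fun s => i s - k) (fun s => i s + k) := by
    intro j hj
    have hk := (mem_filter.mp hj).2
    simp only [Finset.sup_le_iff, mem_univ, true_implies] at hk
    simp only [mem_Icc, Pi.le_def]
    exact ⟨fun s => by have := hk s; omega, fun s => by have := hk s; omega⟩
  calc _ ≤ #(Icc (fun s => i s - k) (fun s => i s + k)) := card_le_card hball
    _ = (2 * k + 1) ^ Fintype.card ι := by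
      have hside : ∀ s, #(Icc (i s - k) (i s + k)) = 2 * k + 1 := fun s => by
        rw [Int.card_Icc]; omega
      simp only [Pi.card_Icc, hside, prod_const, card_univ]

theorem sum_sup_natAbs_sub_rpow_neg_le [DecidableEq ι] [Nonempty ι] {ν : ℝ} (hν : 0 ≤ ν)
    (i : ι → ℤ) (S : Finset (ι → ℤ)) (hi : i ∉ S) :
    ∑ j ∈ S, ((univ.sup fun s => (i s - j s).natAbs : ℕ) : ℝ) ^ (-ν) ≤
      3 ^ ν * ∑ m ∈ range #S, ((m : ℝ) + 1) ^ (-(ν / Fintype.card ι)) := by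
  have hpos : ∀ j ∈ S, 0 < univ.sup fun s => (i s - j s).natAbs :=
    fun j hj => sup_natAbs_sub_pos (ne_of_mem_of_not_mem hj hi)
  refine sum_rpow_neg_le_of_card_le Fintype.card_pos hν (by norm_num) _ S
    (fun j hj => by exact_mod_cast hpos j hj) fun j hj => ?_
  set k := univ.sup fun s => (i s - j s).natAbs
  simp only [Nat.cast_le]
  calc (#{x ∈ S | (univ.sup fun s => (i s - x s).natAbs) ≤ k} : ℝ)
      ≤ ((2 * k + 1) ^ Fintype.card ι : ℕ) := by
        exact_mod_cast card_filter_sup_natAbs_sub_le i S k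
    _ ≤ (3 * k : ℝ) ^ Fintype.card ι := by
        have : (1 : ℝ) ≤ k := by exact_mod_cast hpos j hj
        push_cast
        gcongr
        linarith

end Lattice

theorem stmt3_general (d : ℕ) (ν : ℝ) (hν0 : 0 < ν) (hνd : ν < d) :
    ∃ c : ℝ, 0 < c ∧ ∀ (a b i : Fin d → ℤ), i ∈ Finset.Icc a b →
      ∑ j ∈ (Finset.Icc a b).erase i,
        ((Finset.univ.sup fun s => (i s - j s).natAbs : ℕ) : ℝ) ^ (-ν) ≤
        c * (1 + Real.log ((Finset.Icc a b).card)) *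
          (((Finset.Icc a b).card : ℝ)) ^ (1 - ν / d) := by
  have hd : 0 < d := by exact_mod_cast hν0.trans hνd
  have hs : 0 < 1 - ν / d := by rw [sub_pos, div_lt_one (by positivity)]; exact hνd
  refine ⟨3 ^ ν / (1 - ν / d), by positivity, fun a b i hi => ?_⟩
  have : Nonempty (Fin d) := ⟨⟨0, hd⟩⟩
  set U := Icc a b
  have hlog : 0 ≤ Real.log #U := Real.log_natCast_nonneg _
  have hlattice := sum_sup_natAbs_sub_rpow_neg_le hν0.le i (U.erase i) (notMem_erase i U)
  rw [card_erase_of_mem hi, Fintype.card_fin] at hlattice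
  calc _ ≤ 3 ^ ν * ∑ m ∈ range #U, ((m : ℝ) + 1) ^ (-(ν / d)) := by
        refine hlattice.trans (mul_le_mul_of_nonneg_left ?_ (by positivity))
        exact sum_le_sum_of_subset_of_nonneg (range_subset_range.mpr (Nat.sub_le _ _))
          fun _ _ _ => by positivity
    _ ≤ 3 ^ ν * ((#U : ℝ) ^ (1 - ν / d) / (1 - ν / d)) := by
        gcongr
        exact sum_range_add_one_rpow_neg_le (by positivity) (by linarith) _
    _ = 3 ^ ν / (1 - ν / d) * 1 * (#U : ℝ) ^ (1 - ν / d) := by ring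
    _ ≤ _ := by gcongr; linarith

/-- Lemma 2.2 of Bulinski–Shashkin, case `0 < ν < d` (with a logarithmic factor
covering integer `ν` as well). -/
theorem stmt3 (d : ℕ) (hd : 1 ≤ d) (ν : ℝ) (hν0 : 0 < ν) (hνd : ν < d) :
    ∃ c : ℝ, 0 < c ∧ ∀ (a b i : Fin d → ℤ), i ∈ Finset.Icc a b →
      ∑ j ∈ (Finset.Icc a b).erase i,
        ((Finset.univ.sup fun s => (i s - j s).natAbs : ℕ) : ℝ) ^ (-ν) ≤
        c * (1 + Real.log ((Finset.Icc a b).card)) *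
          (((Finset.Icc a b).card : ℝ)) ^ (1 - ν / d) :=
  stmt3_general d ν hν0 hνd
end

section
/- Let X and Y be random fields indexed by ℤ^d on a common probability space, with Y consisting of mutually independent random variables and Y independent of X. Suppose X satisfies the (BL,θ)-dependence property: for all disjoint finite I, J ⊂ ℤ^d and all bounded Lipschitz f: ℝ^|I| → ℝ, g: ℝ^|J| → ℝ, |cov(f(X_I), g(X_J))| ≤ Lip(f)·Lip(g)·(|I| ∧ |J|)·θ_r with r = dist(I,J). Then for all such I, J, f, g, |cov(f(X_I + Y_I), g(X_J + Y_J))| ≤ Lip(f)·Lip(g)·(|I| ∧ |J|)·θ_r, i.e. the field X + Y is (BL,θ)-dependent with the same sequence θ. -/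
open MeasureTheory ProbabilityTheory Finset

/-!
Write `μ` and `ν` for the laws of `X` and `Y`. Since `X` and `Y` are independent, the joint law
is `μ ⊗ ν`, and the law of total covariance over the `Y`-coordinate gives
`cov(f(X+Y), g(X+Y)) = ∫ cov_μ(f(· + y), g(· + y)) dν(y) + cov_ν(F, G)`, where
`F y = ∫ f(x + y) dμ(x)` and `G y = ∫ g(x + y) dμ(x)`. Translation by `y` preserves the Lipschitz
bounds, so every inner covariance is bounded by the `(BL,θ)` estimate for `X`. A Lipschitz bound
in the coordinates of `I` makes `f`, hence `F`, a function of the coordinates in `I` only, and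
likewise `G` of those in `J`; as the `Y_i` are mutually independent and `I`, `J` are disjoint,
`F(Y)` and `G(Y)` are independent, so `cov_ν(F, G) = 0`.
-/

section BoundedCovariance

variable {α : Type*} [MeasurableSpace α] {μ : Measure α}

lemma integrable_of_abs_le [IsFiniteMeasure μ] {f : α → ℝ} (hf : Measurable f) {C : ℝ}
    (hfC : ∀ x, |f x| ≤ C) : Integrable f μ :=
  .of_bound hf.aestronglyMeasurable C (ae_of_all _ hfC)

lemma memLp_of_abs_le [IsFiniteMeasure μ] {f : α → ℝ} (hf : Measurable f) {C : ℝ}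
    (hfC : ∀ x, |f x| ≤ C) (p : ENNReal) : MemLp f p μ :=
  .of_bound hf.aestronglyMeasurable C (ae_of_all _ hfC)

lemma abs_mul_le_of_abs_le {a b Ca Cb : ℝ} (ha : |a| ≤ Ca) (hb : |b| ≤ Cb) :
    |a * b| ≤ Ca * Cb := by
  rw [abs_mul]
  exact mul_le_mul ha hb (abs_nonneg b) ((abs_nonneg a).trans ha)

variable [IsProbabilityMeasure μ]

lemma abs_integral_le_of_forall_abs_le {f : α → ℝ} {C : ℝ} (hfC : ∀ x, |f x| ≤ C) :
    |∫ x, f x ∂μ| ≤ C := by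
  simpa using norm_integral_le_of_norm_le_const (μ := μ) (f := f) (C := C) (ae_of_all _ hfC)

lemma covariance_eq_sub_of_abs_le {f g : α → ℝ} (hf : Measurable f) (hg : Measurable g)
    {Cf Cg : ℝ} (hfC : ∀ x, |f x| ≤ Cf) (hgC : ∀ x, |g x| ≤ Cg) :
    cov[f, g; μ] = ∫ x, f x * g x ∂μ - (∫ x, f x ∂μ) * ∫ x, g x ∂μ :=
  covariance_eq_sub (memLp_of_abs_le hf hfC 2) (memLp_of_abs_le hg hgC 2)

/-- The law of total covariance, conditioning on the second coordinate. -/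
theorem covariance_prod_eq_integral_covariance_add_covariance_integral
    {β : Type*} [MeasurableSpace β] {ν : Measure β} [IsProbabilityMeasure ν]
    {φ ψ : α × β → ℝ} (hφ : Measurable φ) (hψ : Measurable ψ) {Cφ Cψ : ℝ}
    (hφC : ∀ z, |φ z| ≤ Cφ) (hψC : ∀ z, |ψ z| ≤ Cψ) :
    cov[φ, ψ; μ.prod ν] =
      ∫ y, cov[fun x ↦ φ (x, y), fun x ↦ ψ (x, y); μ] ∂ν +
        cov[fun y ↦ ∫ x, φ (x, y) ∂μ, fun y ↦ ∫ x, ψ (x, y) ∂μ; ν] := by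
  have hφψ : Measurable fun z ↦ φ z * ψ z := hφ.mul hψ
  have hφψC : ∀ z, |φ z * ψ z| ≤ Cφ * Cψ := fun z ↦ abs_mul_le_of_abs_le (hφC z) (hψC z)
  have hΦ := hφ.stronglyMeasurable.integral_prod_left' (μ := μ) |>.measurable
  have hΨ := hψ.stronglyMeasurable.integral_prod_left' (μ := μ) |>.measurable
  have hmeanProd := hφψ.stronglyMeasurable.integral_prod_left' (μ := μ) |>.measurable
  have hΦC : ∀ y, |∫ x, φ (x, y) ∂μ| ≤ Cφ := fun y ↦ abs_integral_le_of_forall_abs_le fun x ↦ hφC _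
  have hΨC : ∀ y, |∫ x, ψ (x, y) ∂μ| ≤ Cψ := fun y ↦ abs_integral_le_of_forall_abs_le fun x ↦ hψC _
  have hsection : ∀ y, cov[fun x ↦ φ (x, y), fun x ↦ ψ (x, y); μ] =
      ∫ x, φ (x, y) * ψ (x, y) ∂μ - (∫ x, φ (x, y) ∂μ) * ∫ x, ψ (x, y) ∂μ := fun y ↦
    covariance_eq_sub_of_abs_le (hφ.comp measurable_prodMk_right)
      (hψ.comp measurable_prodMk_right) (fun x ↦ hφC _) (fun x ↦ hψC _)
  have hmeanProd_int : Integrable (fun y ↦ ∫ x, φ (x, y) * ψ (x, y) ∂μ) ν :=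
    integrable_of_abs_le hmeanProd fun y ↦ abs_integral_le_of_forall_abs_le fun x ↦ hφψC _
  have hΦΨ_int : Integrable (fun y ↦ (∫ x, φ (x, y) ∂μ) * ∫ x, ψ (x, y) ∂μ) ν :=
    integrable_of_abs_le (hΦ.mul hΨ) fun y ↦ abs_mul_le_of_abs_le (hΦC y) (hΨC y)
  simp_rw [hsection, covariance_eq_sub_of_abs_le hφ hψ hφC hψC,
    covariance_eq_sub_of_abs_le hΦ hΨ hΦC hΨC]
  rw [integral_sub hmeanProd_int hΦΨ_int,
    integral_prod_symm _ (integrable_of_abs_le hφψ hφψC),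
    integral_prod_symm _ (integrable_of_abs_le hφ hφC),
    integral_prod_symm _ (integrable_of_abs_le hψ hψC)]
  ring

end BoundedCovariance

lemma dependsOn_of_abs_sub_le_mul_sum {ι : Type*} {f : (ι → ℝ) → ℝ} {s : Finset ι} {L : ℝ}
    (hf : ∀ x x', |f x - f x'| ≤ L * ∑ i ∈ s, |x i - x' i|) : DependsOn f s := by
  intro x x' hxx'
  have hdist := hf x x'
  rw [Finset.sum_eq_zero fun i hi ↦ by simp [hxx' i hi], mul_zero] at hdist
  exact sub_eq_zero.mp (abs_nonpos_iff.mp hdist)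

lemma DependsOn.integral_comp_add {ι : Type*} {α : ι → Type*} [∀ i, Add (α i)]
    [∀ i, MeasurableSpace (α i)] {E : Type*} [NormedAddCommGroup E] [NormedSpace ℝ E]
    {f : (∀ i, α i) → E} {s : Set ι} (hf : DependsOn f s) (μ : Measure (∀ i, α i)) :
    DependsOn (fun y ↦ ∫ x, f (x + y) ∂μ) s := fun y y' hyy' ↦
  integral_congr_ae (ae_of_all _ fun x ↦ hf fun i hi ↦ by simp [hyy' i hi])

lemma measurable_integral_comp_add {E : Type*} [MeasurableSpace E] [Add E] [MeasurableAdd₂ E]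
    {μ : Measure E} [SFinite μ] {f : E → ℝ} (hf : Measurable f) :
    Measurable fun y ↦ ∫ x, f (x + y) ∂μ :=
  (hf.comp measurable_add).stronglyMeasurable.integral_prod_left'.measurable

section RandomVariables

variable {Ω : Type*} [MeasurableSpace Ω] {P : Measure Ω}

theorem ProbabilityTheory.IndepFun.covariance_comp_add {E : Type*} [MeasurableSpace E] [Add E]
    [MeasurableAdd₂ E] [IsProbabilityMeasure P] {X Y : Ω → E} (hXY : IndepFun X Y P)
    (hX : Measurable X) (hY : Measurable Y) {f g : E → ℝ} (hf : Measurable f)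
    (hg : Measurable g) {Cf Cg : ℝ} (hfC : ∀ x, |f x| ≤ Cf) (hgC : ∀ x, |g x| ≤ Cg) :
    cov[fun ω ↦ f (X ω + Y ω), fun ω ↦ g (X ω + Y ω); P] =
      ∫ y, cov[fun x ↦ f (x + y), fun x ↦ g (x + y); P.map X] ∂(P.map Y) +
        cov[fun y ↦ ∫ x, f (x + y) ∂(P.map X), fun y ↦ ∫ x, g (x + y) ∂(P.map X); P.map Y] := by
  have := Measure.isProbabilityMeasure_map (μ := P) hX.aemeasurable
  have := Measure.isProbabilityMeasure_map (μ := P) hY.aemeasurable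
  have hφ : Measurable fun p : E × E ↦ f (p.1 + p.2) := hf.comp measurable_add
  have hψ : Measurable fun p : E × E ↦ g (p.1 + p.2) := hg.comp measurable_add
  rw [← covariance_prod_eq_integral_covariance_add_covariance_integral hφ hψ (fun _ ↦ hfC _)
      (fun _ ↦ hgC _), ← hXY.map_prod_eq_prod_map_map hX.aemeasurable hY.aemeasurable,
    covariance_map hφ.aestronglyMeasurable hψ.aestronglyMeasurable (hX.prodMk hY).aemeasurable]
  rfl

lemma ProbabilityTheory.iIndepFun.indepFun_comp_of_dependsOn {ι : Type*} {β : ι → Type*}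
    [∀ i, MeasurableSpace (β i)] [∀ i, Nonempty (β i)] {Y : ∀ i, Ω → β i}
    (hY : iIndepFun Y P) (hYm : ∀ i, Measurable (Y i)) {S T : Finset ι} (hST : Disjoint S T)
    {γ γ' : Type*} [MeasurableSpace γ] [MeasurableSpace γ'] {φ : (∀ i, β i) → γ}
    {ψ : (∀ i, β i) → γ'} (hφ : Measurable φ) (hψ : Measurable ψ)
    (hφS : DependsOn φ S) (hψT : DependsOn ψ T) :
    IndepFun (fun ω ↦ φ (fun i ↦ Y i ω)) (fun ω ↦ ψ (fun i ↦ Y i ω)) P := by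
  classical
  let y₀ : ∀ i, β i := fun _ ↦ Classical.arbitrary _
  have hblocks := (hY.indepFun_finset S T hST hYm).comp
    (hφ.comp (measurable_updateFinset (x := y₀))) (hψ.comp (measurable_updateFinset (x := y₀)))
  convert hblocks using 1 <;> funext ω
  · exact hφS fun i hi ↦ by simp [Function.updateFinset, Finset.mem_coe.mp hi]
  · exact hψT fun i hi ↦ by simp [Function.updateFinset, Finset.mem_coe.mp hi]

/-- The cross term of the law of total covariance vanishes: the means over `X` of `f` and `g`
are functions of the independent blocks `(Y_i)_{i ∈ S}` and `(Y_i)_{i ∈ T}`. -/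
theorem covariance_comp_add_eq_integral_covariance {ι : Type*} [IsProbabilityMeasure P]
    {X Y : ι → Ω → ℝ} (hXm : ∀ i, Measurable (X i)) (hYm : ∀ i, Measurable (Y i))
    (hYindep : iIndepFun Y P) (hXY : IndepFun (fun ω i ↦ X i ω) (fun ω i ↦ Y i ω) P)
    {S T : Finset ι} (hST : Disjoint S T) {f g : (ι → ℝ) → ℝ} (hf : Measurable f)
    (hg : Measurable g) {Cf Cg : ℝ} (hfC : ∀ x, |f x| ≤ Cf) (hgC : ∀ x, |g x| ≤ Cg)
    (hfS : DependsOn f S) (hgT : DependsOn g T) :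
    cov[fun ω ↦ f (fun i ↦ X i ω + Y i ω), fun ω ↦ g (fun i ↦ X i ω + Y i ω); P] =
      ∫ y, cov[fun x ↦ f (x + y), fun x ↦ g (x + y); P.map fun ω i ↦ X i ω]
        ∂(P.map fun ω i ↦ Y i ω) := by
  have hX : Measurable fun ω i ↦ X i ω := measurable_pi_lambda _ hXm
  have hY : Measurable fun ω i ↦ Y i ω := measurable_pi_lambda _ hYm
  have := Measure.isProbabilityMeasure_map (μ := P) hX.aemeasurable
  have hF := measurable_integral_comp_add (μ := P.map fun ω i ↦ X i ω) hf
  have hG := measurable_integral_comp_add (μ := P.map fun ω i ↦ X i ω) hg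
  have hmeans : cov[fun y ↦ ∫ x, f (x + y) ∂(P.map fun ω i ↦ X i ω),
      fun y ↦ ∫ x, g (x + y) ∂(P.map fun ω i ↦ X i ω); P.map fun ω i ↦ Y i ω] = 0 := by
    rw [covariance_map hF.aestronglyMeasurable hG.aestronglyMeasurable hY.aemeasurable]
    exact (hYindep.indepFun_comp_of_dependsOn hYm hST hF hG (hfS.integral_comp_add _)
      (hgT.integral_comp_add _)).covariance_eq_zero
      (memLp_of_abs_le (hF.comp hY) (fun _ ↦ abs_integral_le_of_forall_abs_le fun _ ↦ hfC _) 2)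
      (memLp_of_abs_le (hG.comp hY) (fun _ ↦ abs_integral_le_of_forall_abs_le fun _ ↦ hgC _) 2)
  refine (hXY.covariance_comp_add hX hY hf hg hfC hgC).trans ?_
  rw [hmeans, add_zero]

end RandomVariables

/-- Lemma 3.9 of Bulinski–Shashkin: adding an independent field `Y` of mutually
independent random variables to a `(BL,θ)`-dependent field `X` preserves the
`(BL,θ)`-dependence property with the same sequence `θ`. -/
theorem stmt10 {Ω : Type*} [MeasurableSpace Ω] (P : Measure Ω) [IsProbabilityMeasure P]
    (d : ℕ) (X Y : (Fin d → ℤ) → Ω → ℝ)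
    (hXm : ∀ i, Measurable (X i)) (hYm : ∀ i, Measurable (Y i))
    (hYindep : iIndepFun Y P)
    (hXYindep : IndepFun (fun ω (i : Fin d → ℤ) => X i ω) (fun ω (i : Fin d → ℤ) => Y i ω) P)
    (θ : ℕ → ℝ)
    (hBL : ∀ (I J : Finset (Fin d → ℤ)) (hI : I.Nonempty) (hJ : J.Nonempty),
      Disjoint I J →
      ∀ (f g : ((Fin d → ℤ) → ℝ) → ℝ) (Lf Lg : ℝ), Measurable f → Measurable g →
      (∃ Mf, ∀ x, |f x| ≤ Mf) → (∃ Mg, ∀ x, |g x| ≤ Mg) →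
      (∀ x x', |f x - f x'| ≤ Lf * ∑ i ∈ I, |x i - x' i|) →
      (∀ x x', |g x - g x'| ≤ Lg * ∑ j ∈ J, |x j - x' j|) →
      |(∫ ω, f (fun i => X i ω) * g (fun i => X i ω) ∂P) -
          (∫ ω, f (fun i => X i ω) ∂P) * ∫ ω, g (fun i => X i ω) ∂P| ≤
        Lf * Lg * (min I.card J.card) *
          θ ((I ×ˢ J).inf' (hI.product hJ) fun p =>
              Finset.univ.sup fun s => (p.1 s - p.2 s).natAbs)) :
    ∀ (I J : Finset (Fin d → ℤ)) (hI : I.Nonempty) (hJ : J.Nonempty),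
      Disjoint I J →
      ∀ (f g : ((Fin d → ℤ) → ℝ) → ℝ) (Lf Lg : ℝ), Measurable f → Measurable g →
      (∃ Mf, ∀ x, |f x| ≤ Mf) → (∃ Mg, ∀ x, |g x| ≤ Mg) →
      (∀ x x', |f x - f x'| ≤ Lf * ∑ i ∈ I, |x i - x' i|) →
      (∀ x x', |g x - g x'| ≤ Lg * ∑ j ∈ J, |x j - x' j|) →
      |(∫ ω, f (fun i => X i ω + Y i ω) * g (fun i => X i ω + Y i ω) ∂P) -
          (∫ ω, f (fun i => X i ω + Y i ω) ∂P) * ∫ ω, g (fun i => X i ω + Y i ω) ∂P| ≤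
        Lf * Lg * (min I.card J.card) *
          θ ((I ×ˢ J).inf' (hI.product hJ) fun p =>
              Finset.univ.sup fun s => (p.1 s - p.2 s).natAbs) := by
  intro I J hI hJ hIJ f g Lf Lg hf hg ⟨Cf, hfC⟩ ⟨Cg, hgC⟩ hfL hgL
  have hXX : Measurable fun ω (i : Fin d → ℤ) ↦ X i ω := measurable_pi_lambda _ hXm
  have hinner (y : (Fin d → ℤ) → ℝ) :
      |cov[fun x ↦ f (x + y), fun x ↦ g (x + y); P.map fun ω i ↦ X i ω]| ≤
        Lf * Lg * (min I.card J.card) * θ ((I ×ˢ J).inf' (hI.product hJ) fun p ↦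
          Finset.univ.sup fun s ↦ (p.1 s - p.2 s).natAbs) := by
    have hfy : Measurable fun x ↦ f (x + y) := hf.comp (measurable_add_const y)
    have hgy : Measurable fun x ↦ g (x + y) := hg.comp (measurable_add_const y)
    rw [covariance_map hfy.aestronglyMeasurable hgy.aestronglyMeasurable hXX.aemeasurable,
      covariance_eq_sub_of_abs_le (hfy.comp hXX) (hgy.comp hXX) (fun _ ↦ hfC _) (fun _ ↦ hgC _)]
    exact hBL I J hI hJ hIJ _ _ Lf Lg hfy hgy ⟨Cf, fun _ ↦ hfC _⟩ ⟨Cg, fun _ ↦ hgC _⟩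
      (fun x x' ↦ by simpa using hfL (x + y) (x' + y))
      (fun x x' ↦ by simpa using hgL (x + y) (x' + y))
  have hfXY : Measurable fun ω ↦ f fun i ↦ X i ω + Y i ω := by fun_prop
  have hgXY : Measurable fun ω ↦ g fun i ↦ X i ω + Y i ω := by fun_prop
  have := Measure.isProbabilityMeasure_map (μ := P) (measurable_pi_lambda _ hYm).aemeasurable
  rw [← covariance_eq_sub_of_abs_le hfXY hgXY (fun _ ↦ hfC _) (fun _ ↦ hgC _),
    covariance_comp_add_eq_integral_covariance hXm hYm hYindep hXYindep hIJ hf hg hfC hgC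
      (dependsOn_of_abs_sub_le_mul_sum hfL) (dependsOn_of_abs_sub_le_mul_sum hgL)]
  exact abs_integral_le_of_forall_abs_le hinner
end
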